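/- arXiv:math-ph/0211071 — 5 statements merged into one kernel-verified Lean document; each statement's English description precedes it below -/
import Mathlib

section
/- For a full-rank lattice Γ ⊂ R^n, a continuous function f : R^n → C is strongly Γ-equivariant if and only if it is Γ-periodic, i.e., f(x + γ) = f(x) for all γ ∈ Γ and x ∈ R^n. -/
open Metric Set

noncomputable section

/-- Euclidean space ℝ^n. -/
abbrev E (n : ℕ) := EuclideanSpace ℝ (Fin n)

variable {V : Type*} [SeminormedAddCommGroup V]

/-- The setTranslate `S - x` of a point set `S`. -/
def setTranslate (S : Set V) (x : V) : Set V := {v | x + v ∈ S}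

/-- The `r`-patch of `P` at `x`: `B_r ∩ (P - x)` where `B_r` is the closed `r`-ball at `0`. -/
def patch (P : Set V) (x : V) (r : ℝ) : Set V := Metric.closedBall (0 : V) r ∩ setTranslate P x

/-- `f` is strongly `P`-equivariant: for some `r > 0`, equality of the `r`-patches of `P`
at `x` and `y` implies `f x = f y`. -/
def StronglyEquivariant (P : Set V) {X : Type*} (f : V → X) : Prop :=
  ∃ r > 0, ∀ x y : V, patch P x r = patch P y r → f x = f y

/-- `D` is locally derivable from `P`. -/
def LocallyDerivable (P D : Set V) : Prop :=
  ∀ r > 0, ∃ R > 0, ∀ x y : V, patch P x R = patch P y R → patch D x r = patch D y r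

/-- `P` has finite local complexity: for each `r > 0` there are only finitely many
translation classes of `r`-patches (anchored at points of `P`). -/
def FiniteLocalComplexity (P : Set V) : Prop :=
  ∀ r > 0, {s : Set V | ∃ p ∈ P, s = patch P p r}.Finite

/-- `P` is uniformly discrete. -/
def UniformlyDiscrete (P : Set V) : Prop :=
  ∃ r0 > 0, ∀ p ∈ P, ∀ q ∈ P, p ≠ q → r0 ≤ dist p q

/-- `P` is relatively dense. -/
def RelativelyDense (P : Set V) : Prop :=
  ∃ R > 0, ∀ x : V, ∃ p ∈ P, dist x p ≤ R

/-- The pattern (pseudo)metric `D(S,S') = min(1, inf {1/(r+1) | ∃ x x', |x|,|x'| ≤ 1/r,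
B_r ∩ (S-x) = B_r ∩ (S'-x')})`. -/
def patternDist (S S' : Set V) : ℝ :=
  min 1 (sInf {d : ℝ | ∃ r > 0, d = 1 / (r + 1) ∧
    ∃ x x' : V, ‖x‖ ≤ 1 / r ∧ ‖x'‖ ≤ 1 / r ∧ patch S x r = patch S' x' r})

/-!
Patches of a subgroup `Γ` only see the coset `x + Γ`, so strong equivariance implies
periodicity. Conversely, if `Γ` is relatively dense with radius `R`, the `R`-patch at `x`
contains some `γ - x` with `γ ∈ Γ`; equality of the `R`-patches at `x` and `y` then puts
`x - y` in `Γ`, and a periodic `f` takes the same value at `x` and `y`.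
A full-rank lattice is relatively dense with radius `∑ i, ‖b i‖` by rounding coordinates.
-/

namespace AddSubgroup

variable (Γ : AddSubgroup V)

theorem setTranslate_add_mem (x : V) {γ : V} (hγ : γ ∈ Γ) :
    setTranslate (Γ : Set V) (x + γ) = setTranslate Γ x := by
  ext v
  simp only [setTranslate, mem_ofPred_eq, SetLike.mem_coe, add_right_comm x γ v]
  exact Γ.add_mem_cancel_right hγ

theorem patch_add_mem (x : V) {γ : V} (hγ : γ ∈ Γ) (r : ℝ) :
    patch (Γ : Set V) (x + γ) r = patch Γ x r := by
  rw [patch, patch, Γ.setTranslate_add_mem x hγ]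

theorem sub_mem_of_patch_eq {R : ℝ} (hR : ∀ x : V, ∃ γ ∈ Γ, dist x γ ≤ R) {x y : V}
    (h : patch (Γ : Set V) x R = patch Γ y R) : x - y ∈ Γ := by
  obtain ⟨γ, hγ, hdist⟩ := hR x
  have hx : γ - x ∈ patch (Γ : Set V) x R :=
    ⟨by rwa [mem_closedBall, dist_zero_right, ← dist_eq_norm, dist_comm],
      by simpa [setTranslate] using hγ⟩
  have hy : y + (γ - x) ∈ Γ := (h ▸ hx).2
  have hxy : x - y = γ - (y + (γ - x)) := by abel
  rw [hxy]
  exact Γ.sub_mem hγ hy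

variable {X : Type*} {f : V → X}

theorem periodic_of_stronglyEquivariant (hf : StronglyEquivariant (Γ : Set V) f) :
    ∀ γ ∈ Γ, ∀ x, f (x + γ) = f x := by
  obtain ⟨r, -, hr⟩ := hf
  intro γ hγ x
  exact hr _ _ (Γ.patch_add_mem x hγ r)

theorem stronglyEquivariant_of_periodic (hΓ : RelativelyDense (Γ : Set V))
    (hf : ∀ γ ∈ Γ, ∀ x, f (x + γ) = f x) : StronglyEquivariant (Γ : Set V) f := by
  obtain ⟨R, hR, hdense⟩ := hΓ
  refine ⟨R, hR, fun x y h => ?_⟩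
  rw [← hf _ (Γ.sub_mem_of_patch_eq hdense h) y, add_sub_cancel]

theorem stronglyEquivariant_iff_periodic (hΓ : RelativelyDense (Γ : Set V)) :
    StronglyEquivariant (Γ : Set V) f ↔ ∀ γ ∈ Γ, ∀ x, f (x + γ) = f x :=
  ⟨Γ.periodic_of_stronglyEquivariant, Γ.stronglyEquivariant_of_periodic hΓ⟩

end AddSubgroup

theorem range_intCast_smul_sum_eq_span {R M ι : Type*} [Ring R] [AddCommGroup M] [Module R M]
    [Fintype ι] (v : ι → M) :
    range (fun c : ι → ℤ => ∑ i, (c i : R) • v i) = Submodule.span ℤ (range v) := by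
  ext x
  simp [Submodule.mem_span_range_iff_exists_fun, Int.cast_smul_eq_zsmul]

theorem relativelyDense_span_basis {K F ι : Type*} [NormedField K] [LinearOrder K]
    [IsStrictOrderedRing K] [FloorRing K] [HasSolidNorm K] [NormedAddCommGroup F]
    [NormedSpace K F] [Fintype ι] (b : Module.Basis ι K F) :
    RelativelyDense (Submodule.span ℤ (range b) : Set F) := by
  refine ⟨∑ i, ‖b i‖ + 1, by positivity, fun x => ⟨ZSpan.floor b x, (ZSpan.floor b x).2, ?_⟩⟩
  rw [dist_eq_norm, ← ZSpan.fract_apply]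
  linarith [ZSpan.norm_fract_le b x]

theorem stronglyEquivariant_iff_periodic_lattice_general {n : ℕ}
    (b : Module.Basis (Fin n) ℝ (E n)) (Γ : Set (E n))
    (hΓ : Γ = Set.range (fun c : Fin n → ℤ => ∑ i, (c i : ℝ) • b i))
    (f : E n → ℂ) :
    StronglyEquivariant Γ f ↔ ∀ γ ∈ Γ, ∀ x : E n, f (x + γ) = f x := by
  rw [range_intCast_smul_sum_eq_span] at hΓ
  subst hΓ
  exact (Submodule.span ℤ (range b)).toAddSubgroup.stronglyEquivariant_iff_periodic
    (relativelyDense_span_basis b)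

/-- for a full-rank lattice Γ, a continuous function is strongly
Γ-equivariant iff it is Γ-periodic. -/
theorem stronglyEquivariant_iff_periodic_lattice {n : ℕ}
    (b : Module.Basis (Fin n) ℝ (E n)) (Γ : Set (E n))
    (hΓ : Γ = Set.range (fun c : Fin n → ℤ => ∑ i, (c i : ℝ) • b i))
    (f : E n → ℂ) (hf : Continuous f) :
    StronglyEquivariant Γ f ↔ ∀ γ ∈ Γ, ∀ x : E n, f (x + γ) = f x :=
  stronglyEquivariant_iff_periodic_lattice_general b Γ hΓ f
end
end

section
/- If P ⊆ R^n has finite local complexity and f : R^n → R is a continuous strongly P-equivariant function, then f is uniformly continuous on R^n. -/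
open Metric Set

noncomputable section

variable {V : Type*} [SeminormedAddCommGroup V]

lemma mem_patch {V : Type*} [SeminormedAddCommGroup V] {P : Set V} {x v : V} {ρ : ℝ} :
    v ∈ patch P x ρ ↔ ‖v‖ ≤ ρ ∧ x + v ∈ P := by
  simp [patch, setTranslate, dist_zero_right]

lemma patch_translate_eq {V : Type*} [SeminormedAddCommGroup V] {P : Set V} {p q : V}
    {R ρ : ℝ} (u : V) (_hρ : 0 ≤ ρ) (hu : ‖u‖ + ρ ≤ R)
    (h : patch P p R = patch P q R) :
    patch P (p + u) ρ = patch P (q + u) ρ := by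
  ext v
  simp only [mem_patch]
  constructor <;> rintro ⟨hv, hmem⟩ <;> refine ⟨hv, ?_⟩
  · have h1 : u + v ∈ patch P p R :=
      mem_patch.mpr ⟨le_trans (norm_add_le _ _) (by linarith), by rwa [← add_assoc]⟩
    rw [h] at h1
    rw [add_assoc]
    exact (mem_patch.mp h1).2
  · have h1 : u + v ∈ patch P q R :=
      mem_patch.mpr ⟨le_trans (norm_add_le _ _) (by linarith), by rwa [← add_assoc]⟩
    rw [← h] at h1
    rw [add_assoc]
    exact (mem_patch.mp h1).2

/-- a continuous strongly P-equivariant function on ℝ^n, for P of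
finite local complexity, is uniformly continuous. -/
theorem stronglyEquivariant_uniformContinuous {n : ℕ} (P : Set (E n))
    (hFLC : FiniteLocalComplexity P) (f : E n → ℝ) (hf : Continuous f)
    (hSE : StronglyEquivariant P f) :
    UniformContinuous f := by
  classical
  obtain ⟨r, hr, hSEr⟩ := hSE
  set R : ℝ := 2 * r + 3 with hRdef
  have hRpos : (0:ℝ) < R := by positivity
  have hT : {s : Set (E n) | ∃ p ∈ P, s = patch P p R}.Finite := hFLC R hRpos
  rw [Metric.uniformContinuous_iff]
  intro ε hε
  -- representatives of patch classes
  have hrep : ∀ s : Set (E n), s ∈ hT.toFinset → ∃ p, p ∈ P ∧ s = patch P p R := by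
    intro s hs
    simpa using hT.mem_toFinset.mp hs
  choose! rep hrepP hrepEq using hrep
  -- uniform continuity on compact balls
  have hUC : ∀ z : E n, ∃ δ > 0, ∀ u ∈ Metric.closedBall (0 : E n) (r + 2),
      ∀ v ∈ Metric.closedBall (0 : E n) (r + 2),
      dist u v < δ → dist (f (z + u)) (f (z + v)) < ε := by
    intro z
    have hcont : ContinuousOn (fun u => f (z + u)) (Metric.closedBall (0 : E n) (r + 2)) :=
      (hf.comp (continuous_const.add continuous_id)).continuousOn
    have h2 := (isCompact_closedBall (0 : E n) (r + 2)).uniformContinuousOn_of_continuous hcont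
    rw [Metric.uniformContinuousOn_iff] at h2
    obtain ⟨δ, hδ, hd⟩ := h2 ε hε
    exact ⟨δ, hδ, fun u hu v hv h => hd u hu v hv h⟩
  choose δf hδfpos hδf using hUC
  have hFne : (insert (1:ℝ) (hT.toFinset.image (fun s => δf (rep s)))).Nonempty :=
    ⟨1, Finset.mem_insert_self _ _⟩
  obtain ⟨δ, hδmem, hδmin⟩ :
      ∃ δ ∈ insert (1:ℝ) (hT.toFinset.image (fun s => δf (rep s))),
        ∀ b ∈ insert (1:ℝ) (hT.toFinset.image (fun s => δf (rep s))), δ ≤ b :=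
    ⟨_, Finset.min'_mem _ hFne, fun b hb => Finset.min'_le _ b hb⟩
  have hδpos : 0 < δ := by
    rcases Finset.mem_insert.mp hδmem with h | h
    · rw [h]; exact one_pos
    · obtain ⟨s, _, hs⟩ := Finset.mem_image.mp h
      rw [← hs]; exact hδfpos (rep s)
  have hδ1 : δ ≤ 1 := hδmin 1 (Finset.mem_insert_self _ _)
  refine ⟨δ, hδpos, ?_⟩
  intro x y hxy
  by_cases hx : ∃ p ∈ P, dist x p ≤ r + 1
  · obtain ⟨p, hp, hpd⟩ := hx
    set s : Set (E n) := patch P p R with hsdef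
    have hsT : s ∈ hT.toFinset := hT.mem_toFinset.mpr ⟨p, hp, rfl⟩
    have hpq : patch P p R = patch P (rep s) R := (hrepEq s hsT)
    have hδle : δ ≤ δf (rep s) :=
      hδmin _ (Finset.mem_insert_of_mem (Finset.mem_image_of_mem _ hsT))
    have key : ∀ w : E n, ‖w - p‖ ≤ r + 2 → f w = f (rep s + (w - p)) := by
      intro w hw
      have heq : patch P (p + (w - p)) r = patch P (rep s + (w - p)) r :=
        patch_translate_eq (w - p) hr.le (by rw [hRdef]; linarith) hpq
      rw [add_sub_cancel] at heq
      have := hSEr w (rep s + (w - p)) heq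
      exact this
    have hxu : ‖x - p‖ ≤ r + 2 := by
      rw [← dist_eq_norm] at *; linarith
    have hyu : ‖y - p‖ ≤ r + 2 := by
      rw [← dist_eq_norm]
      calc dist y p ≤ dist y x + dist x p := dist_triangle _ _ _
        _ ≤ 1 + (r + 1) := by
            rw [dist_comm]
            have : dist x y < δ := hxy
            linarith
        _ = r + 2 := by ring
    rw [key x hxu, key y hyu]
    apply hδf (rep s)
    · simpa [dist_zero_right] using hxu
    · simpa [dist_zero_right] using hyu
    · rw [dist_sub_right]; exact lt_of_lt_of_le hxy hδle
  · push_neg at hx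
    have hxe : patch P x r = ∅ := by
      ext v
      simp only [mem_patch, Set.mem_empty_iff_false, iff_false, not_and]
      intro hv hmem
      have h2 := hx (x + v) hmem
      have h3 : dist x (x + v) = ‖v‖ := by
        rw [dist_eq_norm]; simp
      rw [h3] at h2; linarith
    have hye : patch P y r = ∅ := by
      ext v
      simp only [mem_patch, Set.mem_empty_iff_false, iff_false, not_and]
      intro hv hmem
      have h2 := hx (y + v) hmem
      have h3 : dist x (y + v) ≤ dist x y + ‖v‖ := by
        calc dist x (y + v) ≤ dist x y + dist y (y + v) := dist_triangle _ _ _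
          _ = dist x y + ‖v‖ := by simp [dist_eq_norm]
      have : dist x y < δ := hxy
      have : dist x (y + v) < r + 1 := by
        have := hδ1; linarith
      linarith
    rw [hSEr x y (hxe.trans hye.symm), dist_self]
    exact hε
end
end

section
/- The exterior derivative maps strongly P-equivariant smooth differential k-forms to strongly P-equivariant smooth (k+1)-forms, so the strongly P-equivariant forms constitute a differential subcomplex of the de Rham complex of R^n. -/
open Metric Set

noncomputable section

variable {V : Type*} [SeminormedAddCommGroup V]

/-- The exterior derivative of a k-form given by its coefficient functions
(indexed by k-tuples of coordinate indices): the coefficient of the derivative on a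
(k+1)-tuple J is the alternating sum of partial derivatives of the coefficients on the
tuples obtained by omitting one index. -/
def extDer {n k : ℕ} (F : (Fin k → Fin n) → E n → ℝ) :
    (Fin (k + 1) → Fin n) → E n → ℝ :=
  fun J x => ∑ i : Fin (k + 1), (-1 : ℝ) ^ (i : ℕ) *
    fderiv ℝ (F (fun j => J (i.succAbove j))) x (EuclideanSpace.single (J i) (1 : ℝ))


section Aux

lemma fderiv_shift {V W : Type*} [NormedAddCommGroup V] [NormedSpace ℝ V]
    [NormedAddCommGroup W] [NormedSpace ℝ W]
    (f : V → W) (x c : V) (hf : DifferentiableAt ℝ f (x + c)) :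
    fderiv ℝ (fun y => f (y + c)) x = fderiv ℝ f (x + c) := by
  have h1 : HasFDerivAt (fun y : V => y + c) (ContinuousLinearMap.id ℝ V) x :=
    (hasFDerivAt_id x).add_const c
  simpa [Function.comp_def] using (hf.hasFDerivAt.comp x h1).fderiv

lemma patch_translate {V : Type*} [SeminormedAddCommGroup V] {P : Set V} {x y : V} {r R : ℝ}
    (h : patch P x R = patch P y R) (v : V) (hv : ‖v‖ + r ≤ R) :
    patch P (x + v) r = patch P (y + v) r := by
  ext w
  simp only [patch, setTranslate, Set.mem_inter_iff, Metric.mem_closedBall,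
    Set.mem_setOf_eq, dist_zero_right] at *
  have hiff := Set.ext_iff.mp h (v + w)
  simp only [Set.mem_inter_iff, Metric.mem_closedBall, Set.mem_setOf_eq,
    dist_zero_right] at hiff
  constructor
  · rintro ⟨hw, hP⟩
    have hvw : ‖v + w‖ ≤ R := le_trans (norm_add_le _ _) (by linarith)
    have := (hiff.mp ⟨hvw, by rwa [← add_assoc]⟩).2
    exact ⟨hw, by rwa [add_assoc]⟩
  · rintro ⟨hw, hP⟩
    have hvw : ‖v + w‖ ≤ R := le_trans (norm_add_le _ _) (by linarith)
    have := (hiff.mpr ⟨hvw, by rwa [← add_assoc]⟩).2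
    exact ⟨hw, by rwa [add_assoc]⟩

/-- If `f` is smooth and strongly equivariant with radius `r`, then `fderiv f` agrees on
points whose `(r+1)`-patches agree. -/
lemma fderiv_equivariant {n : ℕ} {P : Set (E n)} {f : E n → ℝ}
    (hf : Differentiable ℝ f) {r : ℝ} (hr : 0 < r)
    (heq : ∀ x y : E n, patch P x r = patch P y r → f x = f y)
    {x y : E n} (h : patch P x (r + 1) = patch P y (r + 1)) :
    fderiv ℝ f x = fderiv ℝ f y := by
  have hev : f =ᶠ[nhds x] fun z => f (z + (y - x)) := by
    filter_upwards [Metric.ball_mem_nhds x one_pos] with z hz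
    have hv : ‖z - x‖ + r ≤ r + 1 := by
      have : ‖z - x‖ < 1 := by simpa [dist_eq_norm] using hz
      linarith
    have hp := patch_translate h (z - x) hv
    have hx : x + (z - x) = z := by abel
    have hy : y + (z - x) = z + (y - x) := by abel
    rw [hx, hy] at hp
    exact heq _ _ hp
  calc fderiv ℝ f x = fderiv ℝ (fun z => f (z + (y - x))) x := hev.fderiv_eq
    _ = fderiv ℝ f (x + (y - x)) := fderiv_shift f x (y - x) (hf _)
    _ = fderiv ℝ f y := by congr 1; abel

end Aux

/-- the exterior derivative maps strongly P-equivariant smooth k-forms to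
strongly P-equivariant smooth (k+1)-forms, so they form a differential subcomplex of the
de Rham complex. -/
theorem extDer_stronglyEquivariant {n k : ℕ} (P : Set (E n))
    (hFLC : FiniteLocalComplexity P) (F : (Fin k → Fin n) → E n → ℝ)
    (hF : ∀ I, ContDiff ℝ (⊤ : ℕ∞) (F I) ∧ StronglyEquivariant P (F I)) :
    ∀ J : Fin (k + 1) → Fin n,
      ContDiff ℝ (⊤ : ℕ∞) (extDer F J) ∧ StronglyEquivariant P (extDer F J) := by
  intro J
  constructor
  · apply ContDiff.sum
    intro i _
    exact contDiff_const.mul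
      (((hF _).1.fderiv_right (by simp)).clm_apply contDiff_const)
  · choose r hrpos hr using fun i : Fin (k + 1) => ((hF (fun j => J (i.succAbove j))).2)
    set R : ℝ := 1 + ∑ i, r i with hR
    have hsum : ∀ i, r i ≤ ∑ j, r j := fun i =>
      Finset.single_le_sum (fun j _ => (hrpos j).le) (Finset.mem_univ i)
    have hRpos : 0 < R := by
      have : 0 ≤ ∑ i, r i := Finset.sum_nonneg fun i _ => (hrpos i).le
      linarith
    refine ⟨R, hRpos, fun x y hxy => ?_⟩
    unfold extDer
    refine Finset.sum_congr rfl fun i _ => ?_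
    congr 1
    have hmono : patch P x (r i + 1) = patch P y (r i + 1) := by
      have h0 := patch_translate hxy 0 (by simpa using by linarith [hsum i] : ‖(0 : E n)‖ + (r i + 1) ≤ R)
      simpa using h0
    rw [fderiv_equivariant ((hF _).1.differentiable (by simp)) (hrpos i) (hr i) hmono]
end
end

section
/- Let δ be the Dirac comb on a uniformly discrete set Q ⊆ R^n locally derivable from P, and let ρ : R^n → R be a smooth compactly supported function. Then the convolution f(x) = Σ_{q ∈ Q} ρ(x − q) is a well-defined smooth strongly P-equivariant function. -/
open Metric Set

noncomputable section

variable {V : Type*} [SeminormedAddCommGroup V]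

/-- the convolution of the Dirac comb on a uniformly discrete set Q locally
derivable from P with a smooth compactly supported ρ is a well-defined (locally finite
sum) smooth strongly P-equivariant function. -/
theorem diracComb_convolution_stronglyEquivariant {n : ℕ} (P Q : Set (E n))
    (hFLC : FiniteLocalComplexity P) (hQ : UniformlyDiscrete Q)
    (hQP : LocallyDerivable P Q)
    (ρ : E n → ℝ) (hρ : ContDiff ℝ (⊤ : ℕ∞) ρ) (s : ℝ) (hs : 0 < s)
    (hsupp : Function.support ρ ⊆ Metric.closedBall (0 : E n) s) :
    (∀ x : E n, {q ∈ Q | ρ (x - q) ≠ 0}.Finite) ∧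
    ContDiff ℝ (⊤ : ℕ∞) (fun x : E n => ∑' q : Q, ρ (x - (q : E n))) ∧
    StronglyEquivariant P (fun x : E n => ∑' q : Q, ρ (x - (q : E n))) := by
  obtain ⟨r0, hr0, hsep⟩ := hQ
  -- Q meets every closed ball in a finite set
  have hfin : ∀ (x : E n) (t : ℝ), (Q ∩ Metric.closedBall x t).Finite := by
    intro x t
    by_contra h
    have hinf : (Q ∩ Metric.closedBall x t).Infinite := h
    obtain ⟨c, -, hacc⟩ := hinf.exists_accPt_of_subset_isCompact
      (isCompact_closedBall x t) inter_subset_right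
    rw [accPt_principal_iff_clusterPt, ← mem_closure_iff_clusterPt,
      Metric.mem_closure_iff] at hacc
    obtain ⟨y1, hy1, hd1⟩ := hacc (r0 / 2) (by linarith)
    have hy1c : y1 ≠ c := by
      rintro rfl; exact hy1.2 rfl
    have hpos : 0 < dist c y1 := by
      rw [dist_pos]; exact fun h => hy1c h.symm
    obtain ⟨y2, hy2, hd2⟩ := hacc (min (r0 / 2) (dist c y1))
      (lt_min (by linarith) hpos)
    have hy12 : y1 ≠ y2 := by
      rintro rfl
      exact absurd (min_le_right (r0/2) (dist c y1)) (not_le.2 (lt_of_lt_of_le hd2 le_rfl))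
    have : dist y1 y2 < r0 := by
      calc dist y1 y2 ≤ dist y1 c + dist c y2 := dist_triangle _ _ _
        _ < r0 / 2 + r0 / 2 := by
            have h2 : dist c y2 < r0 / 2 := lt_of_lt_of_le hd2 (min_le_left _ _)
            rw [dist_comm y1 c]; linarith
        _ = r0 := by ring
    exact absurd (hsep y1 hy1.1.1 y2 hy2.1.1 hy12) (not_le.2 this)
  -- pointwise finiteness of the nonzero terms
  have hfin' : ∀ x : E n, {q ∈ Q | ρ (x - q) ≠ 0}.Finite := by
    intro x
    refine (hfin x s).subset ?_
    rintro q ⟨hqQ, hq0⟩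
    refine ⟨hqQ, ?_⟩
    have := hsupp hq0
    rw [Metric.mem_closedBall, dist_zero_right] at this
    rw [Metric.mem_closedBall, dist_eq_norm, ← norm_neg, neg_sub]
    exact this
  refine ⟨hfin', ?_, ?_⟩
  -- smoothness
  · rw [contDiff_iff_contDiffAt]
    intro x0
    have hF : (Q ∩ Metric.closedBall x0 (s + 1)).Finite := hfin x0 (s + 1)
    set F : Finset (E n) := hF.toFinset with hFdef
    have hinj : Set.InjOn (Subtype.val : Q → E n) (Subtype.val ⁻¹' ↑F) :=
      Subtype.val_injective.injOn
    set F' : Finset Q := F.preimage Subtype.val hinj with hF'def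
    have hloc : ∀ x ∈ Metric.ball x0 1,
        (∑' q : Q, ρ (x - (q : E n))) = ∑ q ∈ F, ρ (x - q) := by
      intro x hx
      rw [Metric.mem_ball] at hx
      have h1 : (∑' q : Q, ρ (x - (q : E n))) = ∑ q ∈ F', ρ (x - (q : E n)) := by
        refine tsum_eq_sum ?_
        intro q hq
        by_contra h0
        have hqF : (q : E n) ∈ F := by
          simp only [hFdef, Set.Finite.mem_toFinset]
          refine ⟨q.2, ?_⟩
          rw [Metric.mem_closedBall]
          have hns : ‖x - (q : E n)‖ ≤ s := by
            have := hsupp h0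
            rwa [Metric.mem_closedBall, dist_zero_right] at this
          calc dist (q : E n) x0 ≤ dist (q : E n) x + dist x x0 := dist_triangle _ _ _
            _ ≤ s + 1 := by
                have : dist (q : E n) x ≤ s := by
                  rw [dist_eq_norm, ← norm_neg, neg_sub]; exact hns
                linarith
        exact hq (Finset.mem_preimage.2 hqF)
      rw [h1]
      refine Finset.sum_preimage Subtype.val F hinj (fun q => ρ (x - q)) ?_
      intro b hb hnb
      exfalso
      apply hnb
      rw [Subtype.range_coe]
      simp only [hFdef, Set.Finite.mem_toFinset] at hb
      exact hb.1
    have hsm : ContDiff ℝ (⊤ : ℕ∞) (fun x : E n => ∑ q ∈ F, ρ (x - q)) := by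
      apply ContDiff.sum
      intro q _
      exact hρ.comp (contDiff_id.sub contDiff_const)
    refine hsm.contDiffAt.congr_of_eventuallyEq ?_
    filter_upwards [Metric.isOpen_ball.mem_nhds (Metric.mem_ball_self one_pos)] with x hx
    exact hloc x hx
  -- strong equivariance
  · obtain ⟨R, hR, hder⟩ := hQP (s + 1) (by linarith)
    refine ⟨R, hR, fun x y hxy => ?_⟩
    have key : ∀ z : E n,
        (∑' q : Q, ρ (z - (q : E n))) = ∑' v : patch Q z (s + 1), ρ (-(v : E n)) := by
      intro z
      refine tsum_eq_tsum_of_ne_zero_bij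
        (fun v => ⟨z + (v : patch Q z (s+1)), (v : patch Q z (s+1)).2.2⟩) ?_ ?_ ?_
      · intro a b hab
        have : ((a : patch Q z (s+1)) : E n) = ((b : patch Q z (s+1)) : E n) := by
          have := Subtype.ext_iff.1 hab
          simpa using this
        exact Subtype.ext (Subtype.ext this)
      · rintro q hq
        have hns : ‖z - (q : E n)‖ ≤ s := by
          have := hsupp hq
          rwa [Metric.mem_closedBall, dist_zero_right] at this
        have hv : ((q : E n) - z) ∈ patch Q z (s + 1) := by
          constructor
          · rw [Metric.mem_closedBall, dist_zero_right, ← norm_neg, neg_sub]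
            linarith
          · show z + ((q : E n) - z) ∈ Q
            rw [add_sub_cancel]
            exact q.2
        have hgv : ρ (-(((⟨(q : E n) - z, hv⟩ : patch Q z (s+1)) : E n))) ≠ 0 := by
          simpa [neg_sub] using hq
        refine ⟨⟨⟨(q : E n) - z, hv⟩, hgv⟩, ?_⟩
        apply Subtype.ext
        simp
      · intro v
        congr 1
        simp [sub_add_cancel_left]
    simp only []
    rw [key x, key y, hder x y hxy]
end
end

section
/- If P ⊆ R^n is a Delone set of finite local complexity, then its continuous hull M_P is compact. -/
open Metric Set

noncomputable section

variable {V : Type*} [SeminormedAddCommGroup V]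

lemma setTranslate_setTranslate (P : Set V) (x a : V) :
    setTranslate (setTranslate P x) a = setTranslate P (x + a) := by
  ext v; simp [setTranslate, add_assoc]

lemma patch_setTranslate (P : Set V) (x a : V) (r : ℝ) :
    patch (setTranslate P x) a r = patch P (x + a) r := by
  unfold patch; rw [setTranslate_setTranslate]

lemma patch_shift {P : Set V} {p q : V} {r R0 : ℝ} (hR0 : 0 ≤ R0)
    (hpq : patch P p (r + R0) = patch P q (r + R0)) (u : V) (hu : ‖u‖ ≤ R0) :
    patch P (p + u) r = patch P (q + u) r := by
  have key : ∀ w : V, ∀ v : V, ‖v‖ ≤ r →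
      (v ∈ patch P (w + u) r ↔ u + v ∈ patch P w (r + R0)) := by
    intro w v hv
    simp only [patch, setTranslate, Set.mem_inter_iff, Set.mem_setOf_eq,
      Metric.mem_closedBall, dist_zero_right]
    constructor
    · rintro ⟨-, h⟩
      refine ⟨(norm_add_le u v).trans (by linarith), ?_⟩
      simpa [← add_assoc] using h
    · rintro ⟨-, h⟩
      exact ⟨hv, by simpa [add_assoc] using h⟩
  ext v
  by_cases hv : ‖v‖ ≤ r
  · rw [key p v hv, key q v hv, hpq]
  · simp only [patch, Set.mem_inter_iff, Metric.mem_closedBall, dist_zero_right]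
    exact ⟨fun h => absurd h.1 hv, fun h => absurd h.1 hv⟩

lemma patternDist_le {P : Set V} {x y p q : V} {r R0 : ℝ} (hr : 0 < r) (hR0 : 0 ≤ R0)
    (hpq : patch P p (r + R0) = patch P q (r + R0))
    (hxp : ‖x - p‖ ≤ R0) (hxy : ‖(x - p) - (y - q)‖ ≤ 1 / r) :
    patternDist (setTranslate P x) (setTranslate P y) ≤ 1 / (r + 1) := by
  set S := {d : ℝ | ∃ ρ > 0, d = 1 / (ρ + 1) ∧
    ∃ a a' : V, ‖a‖ ≤ 1 / ρ ∧ ‖a'‖ ≤ 1 / ρ ∧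
      patch (setTranslate P x) a ρ = patch (setTranslate P y) a' ρ} with hS
  have hbdd : BddBelow S := by
    refine ⟨0, fun d hd => ?_⟩
    obtain ⟨ρ, hρ, rfl, -⟩ := hd
    positivity
  have hin : (1 : ℝ) / (r + 1) ∈ S := by
    refine ⟨r, hr, rfl, 0, (q + (x - p)) - y, by rw [norm_zero]; positivity, ?_, ?_⟩
    · have : (q + (x - p)) - y = (x - p) - (y - q) := by abel
      rw [this]; exact hxy
    · rw [patch_setTranslate, patch_setTranslate, add_zero]
      have hx : x = p + (x - p) := by abel
      have hy : y + ((q + (x - p)) - y) = q + (x - p) := by abel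
      rw [hy]
      nth_rewrite 1 [hx]
      exact patch_shift hR0 hpq (x - p) hxp
  calc patternDist (setTranslate P x) (setTranslate P y) ≤ sInf S := min_le_right _ _
    _ ≤ 1 / (r + 1) := csInf_le hbdd hin

/-- the continuous hull of a Delone set of finite local complexity —
realized as a complete metric space Y carrying the pattern metric on the dense
translation orbit ι — is compact. -/
theorem hull_compact {n : ℕ} (P : Set (E n))
    (hud : UniformlyDiscrete P) (hrd : RelativelyDense P)
    (hFLC : FiniteLocalComplexity P)
    (Y : Type) [MetricSpace Y] [CompleteSpace Y] (ι : E n → Y)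
    (hdense : DenseRange ι)
    (hι : ∀ x y : E n, dist (ι x) (ι y) =
      patternDist (setTranslate P x) (setTranslate P y)) :
    CompactSpace Y := by
  classical
  obtain ⟨R0, hR0, hR⟩ := hrd
  have htb : TotallyBounded (Set.range ι) := by
    rw [Metric.totallyBounded_iff]
    intro ε hε
    obtain ⟨r, hr, hlt⟩ : ∃ r : ℝ, 0 < r ∧ 1 / (r + 1) < ε := by
      refine ⟨1 / ε, by positivity, ?_⟩
      rw [div_lt_iff₀ (by positivity)]
      have : ε * (1 / ε + 1) = 1 + ε := by field_simp
      rw [this]; linarith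
    -- finite net of the ball of radius R0
    obtain ⟨T, hTfin, hTcov⟩ := Metric.totallyBounded_iff.mp
      ((isCompact_closedBall (0 : E n) R0).totallyBounded) (1 / (2 * r)) (by positivity)
    -- choice of nearby point of P
    have hp : ∀ x : E n, ∃ p, p ∈ P ∧ dist x p ≤ R0 := fun x => by
      obtain ⟨p, hpP, hd⟩ := hR x; exact ⟨p, hpP, hd⟩
    choose p hpP hpd using hp
    have hnet : ∀ x : E n, ∃ t, t ∈ T ∧ x - p x ∈ Metric.ball t (1 / (2 * r)) := by
      intro x
      have : x - p x ∈ Metric.closedBall (0 : E n) R0 := by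
        simpa [dist_eq_norm] using hpd x
      have := hTcov this
      simpa using this
    choose t htT htb' using hnet
    set φ : E n → Set (E n) × E n := fun x => (patch P (p x) (r + R0), t x) with hφ
    have hrangefin : (Set.range φ).Finite := by
      apply Set.Finite.subset ((hFLC (r + R0) (by positivity)).prod hTfin)
      rintro k ⟨x, rfl⟩
      exact ⟨⟨p x, hpP x, rfl⟩, htT x⟩
    -- representatives
    set g : Set (E n) × E n → Y := fun k =>
      if h : ∃ z, φ z = k then ι h.choose else ι 0 with hg
    refine ⟨g '' Set.range φ, hrangefin.image g, ?_⟩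
    rintro y ⟨x, rfl⟩
    refine Set.mem_iUnion₂.mpr ⟨g (φ x), ⟨φ x, ⟨x, rfl⟩, rfl⟩, ?_⟩
    have hex : ∃ z, φ z = φ x := ⟨x, rfl⟩
    rw [Metric.mem_ball, hg]
    simp only [dif_pos hex]
    set z := hex.choose with hz
    have hφz : φ z = φ x := hex.choose_spec
    have hpatch : patch P (p z) (r + R0) = patch P (p x) (r + R0) :=
      congrArg Prod.fst hφz
    have ht' : t z = t x := congrArg Prod.snd hφz
    have hdiff : ‖(x - p x) - (z - p z)‖ ≤ 1 / r := by
      have h1 : ‖(x - p x) - t x‖ < 1 / (2 * r) := by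
        have := htb' x; rwa [Metric.mem_ball, dist_eq_norm] at this
      have h2 : ‖t x - (z - p z)‖ < 1 / (2 * r) := by
        have := htb' z; rw [Metric.mem_ball, dist_eq_norm, ht'] at this
        rw [norm_sub_rev]; exact this
      calc ‖(x - p x) - (z - p z)‖
          ≤ ‖(x - p x) - t x‖ + ‖t x - (z - p z)‖ := by
            have heq : (x - p x) - (z - p z) =
                ((x - p x) - t x) + (t x - (z - p z)) := by abel
            rw [heq]; exact norm_add_le _ _
        _ ≤ 1 / (2 * r) + 1 / (2 * r) := by linarith
        _ = 1 / r := by field_simp; norm_num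
    have hxp : ‖x - p x‖ ≤ R0 := by simpa [dist_eq_norm] using hpd x
    have hdle : dist (ι x) (ι z) ≤ 1 / (r + 1) := by
      rw [hι]
      exact patternDist_le hr hR0.le hpatch.symm hxp hdiff
    rw [dist_comm] at hdle ⊢
    exact hdle.trans_lt hlt
  have hclosure : IsCompact (Set.univ : Set Y) := by
    rw [← hdense.closure_range]
    exact TotallyBounded.isCompact_of_isClosed htb.closure isClosed_closure
  exact ⟨hclosure⟩
end
end
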